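/- In the exterior algebra over Z/p on generators h_{1,j}, h_{2,j} (j ∈ Z/3), with e_{3,i} = h_{1,i}h_{2,i+1} + h_{2,i}h_{1,i+2} (indices mod 3), one has for each i ∈ Z/3 the identity e_{3,i}^2 · e_{3,i+1} = −2 · h_{2,i}h_{2,i+1}h_{2,i+2}h_{1,i}h_{1,i+1}h_{1,i+2}. In particular e_{3,i}^2 e_{3,i+1} = e_{3,i+1}^2 e_{3,i+2} for all i. -/
import Mathlib


open ExteriorAlgebra

/-- The exterior algebra over `ℤ/p` on generators `h_{1,j}, h_{2,j}`, `j ∈ ℤ/3`. -/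
abbrev MayAlg2 (p : ℕ) : Type :=
  ExteriorAlgebra (ZMod p) ((Fin 2 × ZMod 3) → ZMod p)

/-- The generator `h_{i+1,j}` (so `hGen p 0 j` is `h_{1,j}`, `hGen p 1 j` is `h_{2,j}`). -/
noncomputable def hGen (p : ℕ) (i : Fin 2) (j : ZMod 3) : MayAlg2 p :=
  ExteriorAlgebra.ι (ZMod p) (Pi.single (i, j) (1 : ZMod p))

/-- `e_{3,i} = h_{1,i}h_{2,i+1} + h_{2,i}h_{1,i+2}`. -/
noncomputable def eThree (p : ℕ) (i : ZMod 3) : MayAlg2 p :=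
  hGen p 0 i * hGen p 1 (i + 1) + hGen p 1 i * hGen p 0 (i + 2)

section Key

variable {A : Type*} [Ring A] (a1 a2 a3 a4 a5 a6 : A)
  (s1 : a1 * a1 = 0) (s2 : a2 * a2 = 0) (s3 : a3 * a3 = 0)
  (s4 : a4 * a4 = 0) (s5 : a5 * a5 = 0) (s6 : a6 * a6 = 0)
  (h12 : a2 * a1 = -(a1 * a2)) (h13 : a3 * a1 = -(a1 * a3))
  (h14 : a4 * a1 = -(a1 * a4)) (h15 : a5 * a1 = -(a1 * a5))
  (h16 : a6 * a1 = -(a1 * a6)) (h23 : a3 * a2 = -(a2 * a3))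
  (h24 : a4 * a2 = -(a2 * a4)) (h25 : a5 * a2 = -(a2 * a5))
  (h26 : a6 * a2 = -(a2 * a6)) (h34 : a4 * a3 = -(a3 * a4))
  (h35 : a5 * a3 = -(a3 * a5)) (h36 : a6 * a3 = -(a3 * a6))
  (h45 : a5 * a4 = -(a4 * a5)) (h46 : a6 * a4 = -(a4 * a6))
  (h56 : a6 * a5 = -(a5 * a6))

include s1 s2 s3 s4 s5 s6 h12 h13 h14 h15 h16 h23 h24 h25 h26 h34 h35 h36 h45
  h46 h56 in
theorem key1 :
    (a4 * a2 + a1 * a6) ^ 2 * (a5 * a3 + a2 * a4) =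
      -(a1 * (a2 * (a3 * (a4 * (a5 * a6)))) +
        a1 * (a2 * (a3 * (a4 * (a5 * a6))))) := by
  have s1' : ∀ c : A, a1 * (a1 * c) = 0 := fun c => by
    rw [← mul_assoc, s1, zero_mul]
  have s2' : ∀ c : A, a2 * (a2 * c) = 0 := fun c => by
    rw [← mul_assoc, s2, zero_mul]
  have s3' : ∀ c : A, a3 * (a3 * c) = 0 := fun c => by
    rw [← mul_assoc, s3, zero_mul]
  have s4' : ∀ c : A, a4 * (a4 * c) = 0 := fun c => by
    rw [← mul_assoc, s4, zero_mul]
  have s5' : ∀ c : A, a5 * (a5 * c) = 0 := fun c => by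
    rw [← mul_assoc, s5, zero_mul]
  have s6' : ∀ c : A, a6 * (a6 * c) = 0 := fun c => by
    rw [← mul_assoc, s6, zero_mul]
  have h12' : ∀ c : A, a2 * (a1 * c) = -(a1 * (a2 * c)) := fun c => by
    rw [← mul_assoc, h12, neg_mul, mul_assoc]
  have h13' : ∀ c : A, a3 * (a1 * c) = -(a1 * (a3 * c)) := fun c => by
    rw [← mul_assoc, h13, neg_mul, mul_assoc]
  have h14' : ∀ c : A, a4 * (a1 * c) = -(a1 * (a4 * c)) := fun c => by
    rw [← mul_assoc, h14, neg_mul, mul_assoc]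
  have h15' : ∀ c : A, a5 * (a1 * c) = -(a1 * (a5 * c)) := fun c => by
    rw [← mul_assoc, h15, neg_mul, mul_assoc]
  have h16' : ∀ c : A, a6 * (a1 * c) = -(a1 * (a6 * c)) := fun c => by
    rw [← mul_assoc, h16, neg_mul, mul_assoc]
  have h23' : ∀ c : A, a3 * (a2 * c) = -(a2 * (a3 * c)) := fun c => by
    rw [← mul_assoc, h23, neg_mul, mul_assoc]
  have h24' : ∀ c : A, a4 * (a2 * c) = -(a2 * (a4 * c)) := fun c => by
    rw [← mul_assoc, h24, neg_mul, mul_assoc]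
  have h25' : ∀ c : A, a5 * (a2 * c) = -(a2 * (a5 * c)) := fun c => by
    rw [← mul_assoc, h25, neg_mul, mul_assoc]
  have h26' : ∀ c : A, a6 * (a2 * c) = -(a2 * (a6 * c)) := fun c => by
    rw [← mul_assoc, h26, neg_mul, mul_assoc]
  have h34' : ∀ c : A, a4 * (a3 * c) = -(a3 * (a4 * c)) := fun c => by
    rw [← mul_assoc, h34, neg_mul, mul_assoc]
  have h35' : ∀ c : A, a5 * (a3 * c) = -(a3 * (a5 * c)) := fun c => by
    rw [← mul_assoc, h35, neg_mul, mul_assoc]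
  have h36' : ∀ c : A, a6 * (a3 * c) = -(a3 * (a6 * c)) := fun c => by
    rw [← mul_assoc, h36, neg_mul, mul_assoc]
  have h45' : ∀ c : A, a5 * (a4 * c) = -(a4 * (a5 * c)) := fun c => by
    rw [← mul_assoc, h45, neg_mul, mul_assoc]
  have h46' : ∀ c : A, a6 * (a4 * c) = -(a4 * (a6 * c)) := fun c => by
    rw [← mul_assoc, h46, neg_mul, mul_assoc]
  have h56' : ∀ c : A, a6 * (a5 * c) = -(a5 * (a6 * c)) := fun c => by
    rw [← mul_assoc, h56, neg_mul, mul_assoc]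
  simp only [pow_two, mul_add, add_mul, mul_assoc, mul_neg, neg_mul, neg_neg,
    s1, s2, s3, s4, s5, s6, s1', s2', s3', s4', s5', s6',
    h12, h13, h14, h15, h16, h23, h24, h25, h26, h34, h35, h36, h45, h46, h56,
    h12', h13', h14', h15', h16', h23', h24', h25', h26', h34', h35', h36',
    h45', h46', h56', mul_zero, zero_mul, add_zero, zero_add, neg_zero]

include s1 s2 s3 s4 s5 s6 h12 h13 h14 h15 h16 h23 h24 h25 h26 h34 h35 h36 h45
  h46 h56 in
theorem key2 :
    a2 * (a3 * (a1 * (a5 * (a6 * a4)))) =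
      a1 * (a2 * (a3 * (a4 * (a5 * a6)))) := by
  have h13' : ∀ c : A, a3 * (a1 * c) = -(a1 * (a3 * c)) := fun c => by
    rw [← mul_assoc, h13, neg_mul, mul_assoc]
  have h12' : ∀ c : A, a2 * (a1 * c) = -(a1 * (a2 * c)) := fun c => by
    rw [← mul_assoc, h12, neg_mul, mul_assoc]
  have h46' : ∀ c : A, a6 * (a4 * c) = -(a4 * (a6 * c)) := fun c => by
    rw [← mul_assoc, h46, neg_mul, mul_assoc]
  have h45' : ∀ c : A, a5 * (a4 * c) = -(a4 * (a5 * c)) := fun c => by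
    rw [← mul_assoc, h45, neg_mul, mul_assoc]
  have h56' : ∀ c : A, a6 * (a5 * c) = -(a5 * (a6 * c)) := fun c => by
    rw [← mul_assoc, h56, neg_mul, mul_assoc]
  simp only [mul_neg, neg_mul, neg_neg, h56, h45, h46, h45', h46', h56',
    h12', h13', h12, h13, h23]

end Key

theorem hGen_sq (p : ℕ) (i : Fin 2) (j : ZMod 3) :
    hGen p i j * hGen p i j = 0 :=
  ι_sq_zero _

theorem hGen_swap (p : ℕ) (i i' : Fin 2) (j j' : ZMod 3) :
    hGen p i j * hGen p i' j' = -(hGen p i' j' * hGen p i j) := by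
  have := ι_add_mul_swap (R := ZMod p) (M := (Fin 2 × ZMod 3) → ZMod p)
    (Pi.single (i, j) (1 : ZMod p)) (Pi.single ((i', j')) (1 : ZMod p))
  rw [eq_neg_iff_add_eq_zero]
  exact this

/-- `e_{3,i}² e_{3,i+1} = −2·h_{2,i}h_{2,i+1}h_{2,i+2}h_{1,i}h_{1,i+1}h_{1,i+2}`,
and hence `e_{3,i}² e_{3,i+1} = e_{3,i+1}² e_{3,i+2}` for all `i`. -/
theorem stmt_13 (p : ℕ) (hp : p.Prime) (hodd : Odd p) :
    (∀ i : ZMod 3,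
      eThree p i ^ 2 * eThree p (i + 1) =
        (-2 : ZMod p) • (hGen p 1 i * hGen p 1 (i + 1) * hGen p 1 (i + 2) *
          hGen p 0 i * hGen p 0 (i + 1) * hGen p 0 (i + 2))) ∧
    (∀ i : ZMod 3,
      eThree p i ^ 2 * eThree p (i + 1) =
        eThree p (i + 1) ^ 2 * eThree p (i + 2)) := by
  have hidx1 : ∀ i : ZMod 3, i + 1 + 1 = i + 2 := by decide
  have hidx2 : ∀ i : ZMod 3, i + 1 + 2 = i := by decide
  have hidx3 : ∀ i : ZMod 3, i + 2 + 1 = i := by decide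
  have hidx4 : ∀ i : ZMod 3, i + 2 + 2 = i + 1 := by decide
  have main : ∀ i : ZMod 3,
      eThree p i ^ 2 * eThree p (i + 1) =
        (-2 : ZMod p) • (hGen p 1 i * hGen p 1 (i + 1) * hGen p 1 (i + 2) *
          hGen p 0 i * hGen p 0 (i + 1) * hGen p 0 (i + 2)) := by
    intro i
    have k := key1 (hGen p 1 i) (hGen p 1 (i + 1)) (hGen p 1 (i + 2))
      (hGen p 0 i) (hGen p 0 (i + 1)) (hGen p 0 (i + 2))
      (hGen_sq p _ _) (hGen_sq p _ _) (hGen_sq p _ _) (hGen_sq p _ _)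
      (hGen_sq p _ _) (hGen_sq p _ _)
      (hGen_swap p _ _ _ _) (hGen_swap p _ _ _ _) (hGen_swap p _ _ _ _)
      (hGen_swap p _ _ _ _) (hGen_swap p _ _ _ _) (hGen_swap p _ _ _ _)
      (hGen_swap p _ _ _ _) (hGen_swap p _ _ _ _) (hGen_swap p _ _ _ _)
      (hGen_swap p _ _ _ _) (hGen_swap p _ _ _ _) (hGen_swap p _ _ _ _)
      (hGen_swap p _ _ _ _) (hGen_swap p _ _ _ _) (hGen_swap p _ _ _ _)
    rw [eThree, eThree, hidx1 i, hidx2 i, k]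
    rw [show (-2 : ZMod p) = -(2 : ZMod p) by ring, neg_smul, two_smul]
    simp only [mul_assoc]
  refine ⟨main, fun i => ?_⟩
  have m2 := main (i + 1)
  rw [hidx1 i, hidx2 i] at m2
  rw [main i, m2]
  congr 1
  simp only [mul_assoc]
  exact Eq.symm <| key2 (hGen p 1 i) (hGen p 1 (i + 1)) (hGen p 1 (i + 2))
    (hGen p 0 i) (hGen p 0 (i + 1)) (hGen p 0 (i + 2))
    (hGen_sq p _ _) (hGen_sq p _ _) (hGen_sq p _ _) (hGen_sq p _ _)
    (hGen_sq p _ _) (hGen_sq p _ _)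
    (hGen_swap p _ _ _ _) (hGen_swap p _ _ _ _) (hGen_swap p _ _ _ _)
    (hGen_swap p _ _ _ _) (hGen_swap p _ _ _ _) (hGen_swap p _ _ _ _)
    (hGen_swap p _ _ _ _) (hGen_swap p _ _ _ _) (hGen_swap p _ _ _ _)
    (hGen_swap p _ _ _ _) (hGen_swap p _ _ _ _) (hGen_swap p _ _ _ _)
    (hGen_swap p _ _ _ _) (hGen_swap p _ _ _ _) (hGen_swap p _ _ _ _)
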